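/- Under the hypotheses of the convergence theorem for Iterative Normalization (all iterates nonzero), the sequence is asymptotically regular: the displacement between consecutive iterates tends to zero, i.e., Σᵢ ‖xᵢ⁽ᵏ⁺¹⁾ − xᵢ⁽ᵏ⁾‖₂² → 0 as k → ∞. -/

import Mathlib

/-!
One step of Iterative Normalization is the metric projection onto the product of unit spheres
followed by the orthogonal projection onto the subspace of centered tuples. Let `a(x)` be the
squared distance of a centered tuple `x` to the product of spheres. By Pythagoras for the
centering projection, `a(x)` is the squared displacement of the step plus `n ‖m‖²`, where `m`
is the mean of the normalized tuple; and `n ‖m‖²` is the squared distance from the next iterate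
to a point of the product of spheres, so it bounds `a` of the next iterate. Hence the
displacement is at most the decrease of the nonnegative quantity `a`, which forces it to zero.
-/

open Filter Finset Topology

theorem tendsto_zero_of_le_sub_succ {a D : ℕ → ℝ} (ha : ∀ k, 0 ≤ a k) (hD : ∀ k, 0 ≤ D k)
    (hle : ∀ k, D k ≤ a k - a (k + 1)) : Tendsto D atTop (𝓝 0) := by
  have hanti : Antitone a := antitone_nat_of_succ_le fun k => by linarith [hle k, hD k]
  have hlim := tendsto_atTop_ciInf hanti ⟨0, by rintro _ ⟨k, rfl⟩; exact ha k⟩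
  have hdiff : Tendsto (fun k => a k - a (k + 1)) atTop (𝓝 0) := by
    simpa using hlim.sub (hlim.comp (tendsto_add_atTop_nat 1))
  exact tendsto_of_tendsto_of_tendsto_of_le_of_le tendsto_const_nhds hdiff hD hle

theorem norm_sub_inv_norm_smul_le {E : Type*} [NormedAddCommGroup E] [NormedSpace ℝ E]
    (x u : E) (hu : ‖u‖ = 1) : ‖x - ‖x‖⁻¹ • x‖ ≤ ‖x - u‖ := by
  rcases eq_or_ne x 0 with rfl | hx
  · simp
  calc ‖x - ‖x‖⁻¹ • x‖ = |1 - ‖x‖⁻¹| * |‖x‖| := by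
        rw [abs_norm, ← Real.norm_eq_abs, ← norm_smul, sub_smul, one_smul]
    _ = |‖x‖ - ‖u‖| := by rw [← abs_mul, hu, sub_mul, inv_mul_cancel₀ (norm_ne_zero_iff.mpr hx), one_mul]
    _ ≤ ‖x - u‖ := abs_norm_sub_norm_le x u

theorem sum_norm_add_sq_of_sum_eq_zero {ι E : Type*} [Fintype ι] [NormedAddCommGroup E]
    [InnerProductSpace ℝ E] (c : E) {w : ι → E} (hw : ∑ i, w i = 0) :
    ∑ i, ‖c + w i‖ ^ 2 = Fintype.card ι * ‖c‖ ^ 2 + ∑ i, ‖w i‖ ^ 2 := by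
  simp_rw [norm_add_sq_real]
  rw [sum_add_distrib, sum_add_distrib, ← mul_sum, ← inner_sum, hw, inner_zero_right]
  simp

namespace IterativeNormalization

variable {ι E : Type*} [Fintype ι] [NormedAddCommGroup E] [InnerProductSpace ℝ E]

noncomputable def normalizeEach (x : ι → E) : ι → E := fun i => ‖x i‖⁻¹ • x i

noncomputable def mean (y : ι → E) : E := (Fintype.card ι : ℝ)⁻¹ • ∑ j, y j

noncomputable def center (y : ι → E) : ι → E := fun i => y i - mean y

noncomputable def step (x : ι → E) : ι → E := center (normalizeEach x)

/-- The squared distance from `x` to the product of unit spheres, when all `x i ≠ 0`. -/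
noncomputable def sphereDefect (x : ι → E) : ℝ := ∑ i, ‖x i - normalizeEach x i‖ ^ 2

theorem sum_center (y : ι → E) : ∑ i, center y i = 0 := by
  rcases isEmpty_or_nonempty ι with _ | _
  · simp
  have hcard : (Fintype.card ι : ℝ) ≠ 0 := Nat.cast_ne_zero.mpr Fintype.card_ne_zero
  simp [center, mean, sum_sub_distrib, card_univ, ← Nat.cast_smul_eq_nsmul ℝ, smul_smul, hcard]

theorem sphereDefect_nonneg (x : ι → E) : 0 ≤ sphereDefect x :=
  sum_nonneg fun _ _ => sq_nonneg _

theorem sum_norm_step_sub_sq_le {x : ι → E} (hx : ∑ i, x i = 0) (hnz : ∀ i, x i ≠ 0) :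
    ∑ i, ‖step x i - x i‖ ^ 2 ≤ sphereDefect x - sphereDefect (step x) := by
  set y := normalizeEach x
  have hy : ∀ i, ‖y i‖ = 1 := fun i => norm_smul_inv_norm (hnz i)
  have hstep : ∀ i, step x i = y i - mean y := fun _ => rfl
  have hw : ∑ i, (x i - step x i) = 0 := by rw [sum_sub_distrib, hx, step, sum_center, sub_zero]
  have hdefect : sphereDefect x = Fintype.card ι * ‖mean y‖ ^ 2 + ∑ i, ‖step x i - x i‖ ^ 2 :=
    calc sphereDefect x = ∑ i, ‖-mean y + (x i - step x i)‖ ^ 2 :=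
          sum_congr rfl fun i _ => by rw [hstep]; congr 2; abel
      _ = _ := by
          rw [sum_norm_add_sq_of_sum_eq_zero _ hw, norm_neg]
          simp only [norm_sub_rev (x _)]
  have hnext : sphereDefect (step x) ≤ Fintype.card ι * ‖mean y‖ ^ 2 :=
    calc sphereDefect (step x) ≤ ∑ i, ‖step x i - y i‖ ^ 2 :=
          sum_le_sum fun i _ => pow_le_pow_left₀ (norm_nonneg _)
            (norm_sub_inv_norm_smul_le (step x i) (y i) (hy i)) 2
      _ = Fintype.card ι * ‖mean y‖ ^ 2 := by simp [hstep]
  linarith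

end IterativeNormalization

open IterativeNormalization in
theorem iterative_normalization_asymptotically_regular_general
    (d n : ℕ)
    (X : ℕ → Fin n → EuclideanSpace ℝ (Fin d))
    (hrec : ∀ k : ℕ, ∀ i : Fin n,
      X (k + 1) i =
        (‖X k i‖)⁻¹ • X k i -
          (n : ℝ)⁻¹ • ∑ j : Fin n, (‖X k j‖)⁻¹ • X k j)
    (hnz : ∀ k : ℕ, ∀ i : Fin n, X k i ≠ 0) :
    Tendsto (fun k => ∑ i : Fin n, ‖X (k + 1) i - X k i‖ ^ 2) atTop (nhds 0) := by
  have hstep : ∀ k, X (k + 1) = step (X k) := fun k => by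
    ext1 i; simp [hrec, step, center, mean, normalizeEach]
  have hcentered : ∀ k, ∑ i, X (k + 1) i = 0 := fun k => by rw [hstep]; exact sum_center _
  refine (tendsto_add_atTop_iff_nat 1).mp <|
    tendsto_zero_of_le_sub_succ (a := fun k => sphereDefect (X (k + 1)))
      (fun k => sphereDefect_nonneg _) (fun k => sum_nonneg fun _ _ => sq_nonneg _) fun k => ?_
  simpa only [← hstep] using sum_norm_step_sub_sq_le (hcentered k) (hnz (k + 1))

/-- Asymptotic regularity of Iterative Normalization: the squared Frobenius
displacement between consecutive iterates tends to zero. -/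
theorem iterative_normalization_asymptotically_regular
    (d n : ℕ) (hd : 0 < d) (hn : 1 ≤ n)
    (X : ℕ → Fin n → EuclideanSpace ℝ (Fin d))
    (hrec : ∀ k : ℕ, ∀ i : Fin n,
      X (k + 1) i =
        (‖X k i‖)⁻¹ • X k i -
          (n : ℝ)⁻¹ • ∑ j : Fin n, (‖X k j‖)⁻¹ • X k j)
    (hnz : ∀ k : ℕ, ∀ i : Fin n, X k i ≠ 0) :
    Tendsto (fun k => ∑ i : Fin n, ‖X (k + 1) i - X k i‖ ^ 2) atTop (nhds 0) :=
  iterative_normalization_asymptotically_regular_general d n X hrec hnz
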